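/- Let R₂ = ℤ[U,V]/(U² + V², UV) with u, v the images of U, V, and let φ be a ring automorphism of R₂ that maps the additive subgroup generated by u and v onto itself (i.e., φ preserves degree two). Then φ maps the set {u + v, −(u + v), u − v, v − u} onto itself. -/

import Mathlib

/-!
On the degree-two lattice `ℤu ⊕ ℤv` the squaring map is `(au + bv)² = (a² - b²)u²`, and `u²` has
infinite additive order, so the elements of square zero are the multiples of `u + v` and `u - v`.
The four elements `±(u + v)`, `±(u - v)` are therefore exactly the primitive elements of the
lattice with square zero. That description only involves the ring structure and the lattice, so
it is preserved by every ring automorphism mapping the lattice onto itself.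
-/

open MvPolynomial

/-- The ideal (U² + V², UV) in ℤ[U,V]. -/
noncomputable def I2 : Ideal (MvPolynomial (Fin 2) ℤ) :=
  Ideal.span {X 0 ^ 2 + X 1 ^ 2, X 0 * X 1}

/-- The ring R₂ = ℤ[U,V]/(U² + V², UV), the integral cohomology ring of CP² # −CP². -/
abbrev R2 : Type := MvPolynomial (Fin 2) ℤ ⧸ I2

/-- The image u of U in R₂. -/
noncomputable def R2u : R2 := Ideal.Quotient.mk I2 (X 0)

/-- The image v of V in R₂. -/
noncomputable def R2v : R2 := Ideal.Quotient.mk I2 (X 1)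

lemma coeff_single_one_eq_zero_of_mem_I2 {p : MvPolynomial (Fin 2) ℤ} (hp : p ∈ I2) (i : Fin 2) :
    coeff (Finsupp.single i 1) p = 0 := by
  obtain ⟨f, g, rfl⟩ := Ideal.mem_span_pair.1 hp
  fin_cases i <;> simp [sq, mul_add, ← mul_assoc, coeff_mul_X']

lemma coeff_single_two_eq_of_mem_I2 {p : MvPolynomial (Fin 2) ℤ} (hp : p ∈ I2) :
    coeff (Finsupp.single 0 2) p = coeff (Finsupp.single 1 2) p := by
  obtain ⟨f, g, rfl⟩ := Ideal.mem_span_pair.1 hp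
  have h0 : Finsupp.single (0 : Fin 2) 2 - Finsupp.single 0 1 = Finsupp.single 0 1 := by
    ext i; fin_cases i <;> simp
  have h1 : Finsupp.single (1 : Fin 2) 2 - Finsupp.single 1 1 = Finsupp.single 1 1 := by
    ext i; fin_cases i <;> simp
  simp [sq, mul_add, ← mul_assoc, coeff_mul_X', h0, h1]

lemma linearIndependent_R2u_R2v : LinearIndependent ℤ ![R2u, R2v] := by
  refine LinearIndependent.pair_iff.2 fun s t hst => ?_
  have hmem : s • X 0 + t • X 1 ∈ I2 := by
    rwa [← Ideal.Quotient.eq_zero_iff_mem, map_add, map_zsmul, map_zsmul]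
  have h0 := coeff_single_one_eq_zero_of_mem_I2 hmem 0
  have h1 := coeff_single_one_eq_zero_of_mem_I2 hmem 1
  simp only [coeff_add, coeff_smul, coeff_X, Finsupp.single_eq_single_iff] at h0 h1
  simpa using And.intro h0 h1

lemma eq_zero_of_zsmul_R2u_sq_eq_zero {k : ℤ} (hk : k • R2u ^ 2 = 0) : k = 0 := by
  have hmem : k • X 0 ^ 2 ∈ I2 := by
    rwa [← Ideal.Quotient.eq_zero_iff_mem, map_zsmul, map_pow]
  have := coeff_single_two_eq_of_mem_I2 hmem
  simp only [coeff_smul, coeff_X_pow, Finsupp.single_eq_single_iff] at this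
  simpa using this

lemma R2u_mul_R2v : R2u * R2v = 0 := by
  rw [R2u, R2v, ← map_mul, Ideal.Quotient.eq_zero_iff_mem]
  exact Ideal.subset_span (by simp)

lemma R2u_sq_add_R2v_sq : R2u ^ 2 + R2v ^ 2 = 0 := by
  rw [R2u, R2v, ← map_pow, ← map_pow, ← map_add, Ideal.Quotient.eq_zero_iff_mem]
  exact Ideal.subset_span (by simp)

lemma zsmul_R2u_add_zsmul_R2v_sq (a b : ℤ) :
    (a • R2u + b • R2v) ^ 2 = (a ^ 2 - b ^ 2) • R2u ^ 2 := by
  simp only [zsmul_eq_mul]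
  push_cast
  linear_combination (2 * a * b : R2) * R2u_mul_R2v + (b : R2) ^ 2 * R2u_sq_add_R2v_sq

section PrimitiveIsotropic

variable {R S : Type*} [NonUnitalNonAssocRing R] [NonUnitalNonAssocRing S]

def primitiveIsotropic (L : Set R) : Set R :=
  {x | x ∈ L ∧ x * x = 0 ∧ ∀ n : ℤ, ∀ y ∈ L, x = n • y → IsUnit n}

lemma map_mem_primitiveIsotropic_image_iff (φ : R ≃+* S) (L : Set R) (x : R) :
    φ x ∈ primitiveIsotropic (φ '' L) ↔ x ∈ primitiveIsotropic L := by
  simp only [primitiveIsotropic, Set.mem_ofPred_eq, Set.forall_mem_image, ← map_zsmul, ← map_mul,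
    φ.injective.eq_iff, φ.injective.mem_set_image, map_eq_zero_iff φ φ.injective]

lemma image_primitiveIsotropic (φ : R ≃+* S) (L : Set R) :
    φ '' primitiveIsotropic L = primitiveIsotropic (φ '' L) := by
  ext y
  rw [← φ.apply_symm_apply y, φ.injective.mem_set_image, map_mem_primitiveIsotropic_image_iff]

end PrimitiveIsotropic

lemma mem_primitiveIsotropic_R2_iff {x : R2} :
    x ∈ primitiveIsotropic (AddSubgroup.closure ({R2u, R2v} : Set R2) : Set R2) ↔
      ∃ a b : ℤ, IsUnit a ∧ a ^ 2 = b ^ 2 ∧ a • R2u + b • R2v = x := by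
  have hu : R2u ∈ AddSubgroup.closure ({R2u, R2v} : Set R2) :=
    AddSubgroup.subset_closure (Set.mem_insert _ _)
  have hv : R2v ∈ AddSubgroup.closure ({R2u, R2v} : Set R2) :=
    AddSubgroup.subset_closure (Set.mem_insert_of_mem _ rfl)
  constructor
  · rintro ⟨hx, hsq, hprim⟩
    obtain ⟨a, b, rfl⟩ := AddSubgroup.mem_closure_pair.1 hx
    rw [← sq, zsmul_R2u_add_zsmul_R2v_sq] at hsq
    have hab : a ^ 2 = b ^ 2 := sub_eq_zero.1 (eq_zero_of_zsmul_R2u_sq_eq_zero hsq)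
    have hy : ∃ y ∈ AddSubgroup.closure ({R2u, R2v} : Set R2), a • R2u + b • R2v = a • y := by
      rcases sq_eq_sq_iff_eq_or_eq_neg.1 hab with rfl | rfl
      · exact ⟨R2u + R2v, add_mem hu hv, (smul_add _ _ _).symm⟩
      · exact ⟨R2u - R2v, sub_mem hu hv, by module⟩
    obtain ⟨y, hy, hxy⟩ := hy
    exact ⟨a, b, hprim a y hy hxy, hab, rfl⟩
  · rintro ⟨a, b, ha, hab, rfl⟩
    refine ⟨AddSubgroup.mem_closure_pair.2 ⟨a, b, rfl⟩, ?_, fun n y hy hxy => ?_⟩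
    · rw [← sq, zsmul_R2u_add_zsmul_R2v_sq, hab, sub_self, zero_smul]
    · obtain ⟨c, d, rfl⟩ := AddSubgroup.mem_closure_pair.1 hy
      rw [smul_add, smul_smul, smul_smul] at hxy
      rw [(linearIndependent_R2u_R2v.eq_of_pair hxy).1] at ha
      exact isUnit_of_mul_isUnit_left ha

lemma primitiveIsotropic_R2 :
    primitiveIsotropic (AddSubgroup.closure ({R2u, R2v} : Set R2) : Set R2)
      = {R2u + R2v, -(R2u + R2v), R2u - R2v, R2v - R2u} := by
  ext x
  simp only [mem_primitiveIsotropic_R2_iff, Int.isUnit_iff, Set.mem_insert_iff,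
    Set.mem_singleton_iff]
  constructor
  · rintro ⟨a, b, ha, hab, rfl⟩
    rcases ha with rfl | rfl <;> rcases sq_eq_sq_iff_eq_or_eq_neg.1 hab.symm with rfl | rfl
    · exact Or.inl (by module)
    · exact Or.inr (Or.inr (Or.inl (by module)))
    · exact Or.inr (Or.inl (by module))
    · exact Or.inr (Or.inr (Or.inr (by module)))
  · rintro (rfl | rfl | rfl | rfl)
    · exact ⟨1, 1, by simp, rfl, by module⟩
    · exact ⟨-1, -1, by simp, rfl, by module⟩
    · exact ⟨1, -1, by simp, by norm_num, by module⟩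
    · exact ⟨-1, 1, by simp, by norm_num, by module⟩

/-- Every ring automorphism of R₂ = ℤ[U,V]/(U² + V², UV) which maps the additive subgroup
generated by u and v onto itself (i.e., preserves degree two) maps the set
{u + v, −(u + v), u − v, v − u} onto itself. -/
theorem automorphism_R2_preserves (φ : R2 ≃+* R2)
    (h : ⇑φ '' (AddSubgroup.closure ({R2u, R2v} : Set R2) : Set R2)
        = (AddSubgroup.closure ({R2u, R2v} : Set R2) : Set R2)) :
    ⇑φ '' ({R2u + R2v, -(R2u + R2v), R2u - R2v, R2v - R2u} : Set R2)
      = ({R2u + R2v, -(R2u + R2v), R2u - R2v, R2v - R2u} : Set R2) := by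
  rw [← primitiveIsotropic_R2, image_primitiveIsotropic, h]
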